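/- arXiv:1702.07626 — 2 statements merged into one kernel-verified Lean document; each statement's English description precedes it below -/
import Mathlib

section
/- Let d ≥ 3 and 1 ≤ p, r ≤ ∞. Suppose that for a fixed constant C₀ > 0 the estimate ‖A_C f‖_{L^r(C,σ)} ≤ C₀ ‖f‖_{L^p(F_q^d, dx)} holds for all functions f : F_q^d → ℂ and all sufficiently large powers q of odd primes, and suppose that the cone C does not contain any F_q-linear subspace H of F_q^d with |H| > q^{(d−1)/2}. Then the point (1/p, 1/r) ∈ ℝ² must lie in the convex hull of the four points (0,0), (0,1), ((d−1)/d, 1), and P₀ = ((d−1)/d, 1/d). -/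
/-!
Test the bound on two functions: the Dirac mass at the origin and the indicator of the cone.
Both sides are explicit in `q` and `|C|`, and Schwartz–Zippel gives `|C| ≤ 2 q^(d-1)`. So the
bound forces `q^(d/p) ≲ q^(d-1)` and `q^(d/p) ≲ q^((d-1)(1/p + 1/r))`. Letting `q → ∞` along the
primes gives `1/p ≤ (d-1)/d` and `1/p ≤ (d-1)/r`. Together with `0 ≤ 1/r ≤ 1`, these inequalities
cut out exactly the quadrilateral.
-/

open Finset MeasureTheory
open scoped ENNReal

namespace ConeFF

variable (F : Type) [Field F] [Fintype F] [DecidableEq F]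

/-- The cone `C = {x ∈ F^d : x₁² + ⋯ + x_{d-2}² = x_{d-1} x_d}` (0-indexed). -/
def cone (d : ℕ) (hd : 3 ≤ d) : Finset (Fin d → F) :=
  Finset.univ.filter fun x =>
    (∑ i ∈ Finset.univ.filter (fun i : Fin d => (i : ℕ) < d - 2), x i ^ 2) =
      x ⟨d - 2, by omega⟩ * x ⟨d - 1, by omega⟩

/-- The quadratic form `Γ(ξ) = ξ₁² + ⋯ + ξ_{d-2}² − 4 ξ_{d-1} ξ_d`. -/
def gammaForm (d : ℕ) (hd : 3 ≤ d) (ξ : Fin d → F) : F :=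
  (∑ i ∈ Finset.univ.filter (fun i : Fin d => (i : ℕ) < d - 2), ξ i ^ 2) -
    4 * ξ ⟨d - 2, by omega⟩ * ξ ⟨d - 1, by omega⟩

/-- Indicator function of a finite set, with values in `ℂ`. -/
def ind {V : Type} [DecidableEq V] (E : Finset V) : V → ℂ :=
  fun x => if x ∈ E then 1 else 0

/-- Convolution with respect to the normalized counting measure `dx`. -/
noncomputable def conv (d : ℕ) (f g : (Fin d → F) → ℂ) : (Fin d → F) → ℂ :=
  fun y => ((Fintype.card F : ℂ) ^ d)⁻¹ * ∑ x, f (y - x) * g x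

/-- The averaging operator `f ∗ σ` over the cone. -/
noncomputable def avg (d : ℕ) (hd : 3 ≤ d) (f : (Fin d → F) → ℂ) : (Fin d → F) → ℂ :=
  fun y => ((cone F d hd).card : ℂ)⁻¹ * ∑ x ∈ cone F d hd, f (y - x)

/-- Inverse Fourier transform `f^∨(m) = q^{-d} ∑_x χ(m·x) f(x)`. -/
noncomputable def invFT (d : ℕ) (χ : AddChar F ℂ) (f : (Fin d → F) → ℂ)
    (m : Fin d → F) : ℂ :=
  ((Fintype.card F : ℂ) ^ d)⁻¹ * ∑ x, χ (dotProduct m x) * f x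

/-- Fourier transform `ĝ(x) = ∑_m χ(−m·x) g(m)` on the dual space. -/
noncomputable def ft (d : ℕ) (χ : AddChar F ℂ) (g : (Fin d → F) → ℂ)
    (x : Fin d → F) : ℂ :=
  ∑ m, χ (-(dotProduct m x)) * g m

/-- `σ^∨(m) = |C|⁻¹ ∑_{x∈C} χ(m·x)`. -/
noncomputable def sigmaInv (d : ℕ) (hd : 3 ≤ d) (χ : AddChar F ℂ) (m : Fin d → F) : ℂ :=
  ((cone F d hd).card : ℂ)⁻¹ * ∑ x ∈ cone F d hd, χ (dotProduct m x)

/-- `K(m) = σ^∨(m) − δ₀(m)`. -/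
noncomputable def Kfun (d : ℕ) (hd : 3 ≤ d) (χ : AddChar F ℂ) (m : Fin d → F) : ℂ :=
  sigmaInv F d hd χ m - if m = 0 then 1 else 0

/-- `M(m) = C^∨(m) − (|C|/q^d) δ₀(m)`. -/
noncomputable def Mfun (d : ℕ) (hd : 3 ≤ d) (χ : AddChar F ℂ) (m : Fin d → F) : ℂ :=
  invFT F d χ (ind (cone F d hd)) m -
    if m = 0 then ((cone F d hd).card : ℂ) / (Fintype.card F : ℂ) ^ d else 0

/-- `L^p(C,σ)` norm (for finite `p`), with `σ` the normalized surface measure. -/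
noncomputable def coneLpNorm (d : ℕ) (hd : 3 ≤ d) (p : ℝ) (h : (Fin d → F) → ℂ) : ℝ :=
  (((cone F d hd).card : ℝ)⁻¹ * ∑ x ∈ cone F d hd, ‖h x‖ ^ p) ^ (1 / p)

/-- `L^p(F_q^d, dx)` norm (for finite `p`), with `dx` the normalized counting measure. -/
noncomputable def spaceLpNorm (d : ℕ) (p : ℝ) (f : (Fin d → F) → ℂ) : ℝ :=
  (((Fintype.card F : ℝ) ^ d)⁻¹ * ∑ x, ‖f x‖ ^ p) ^ (1 / p)

end ConeFF

instance (V : Type) (d : ℕ) : MeasurableSpace (Fin d → V) := ⊤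

namespace ConeFF

variable (F : Type) [Field F] [Fintype F] [DecidableEq F]

/-- The normalized counting measure `dx` on `F_q^d`. -/
noncomputable def dxMeasure (d : ℕ) : Measure (Fin d → F) :=
  ((Fintype.card F : ℝ≥0∞) ^ d)⁻¹ • Measure.count

/-- The normalized surface measure `σ` on the cone. -/
noncomputable def coneMeasure (d : ℕ) (hd : 3 ≤ d) : Measure (Fin d → F) :=
  ((cone F d hd).card : ℝ≥0∞)⁻¹ •
    Measure.count.restrict (↑(cone F d hd) : Set (Fin d → F))

end ConeFF

section
variable {α E : Type*} [MeasurableSpace α] [NormedAddCommGroup E]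

theorem mul_measure_rpow_le_eLpNorm {μ : Measure α} {f : α → E} {s : Set α} {c : ℝ≥0∞}
    {r : ℝ≥0∞} (hs : MeasurableSet s) (hμs : μ s ≠ 0) (hr : r ≠ 0)
    (hf : ∀ x ∈ s, c ≤ ‖f x‖ₑ) :
    c * μ s ^ r⁻¹.toReal ≤ eLpNorm f r μ := by
  calc c * μ s ^ r⁻¹.toReal = eLpNorm (s.indicator fun _ ↦ c) r μ := by
        rw [eLpNorm_indicator_const' hs hμs hr, enorm_eq_self, ENNReal.toReal_inv, one_div]
    _ ≤ eLpNorm f r μ := eLpNorm_mono_enorm fun x ↦ by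
        by_cases hx : x ∈ s
        · simpa [hx] using hf x hx
        · simp [hx]

end

theorem le_mul_of_ofReal_le_ofReal_mul {a b c : ℝ} (ha : 0 < a) (hb : 0 ≤ b)
    (h : ENNReal.ofReal a ≤ ENNReal.ofReal c * ENNReal.ofReal b) : a ≤ c * b := by
  rw [← ENNReal.ofReal_mul' hb, ENNReal.ofReal_le_ofReal_iff'] at h
  exact h.resolve_right ha.not_ge

open Filter in
theorem le_of_frequently_rpow_le_mul_rpow {s t K : ℝ}
    (h : ∃ᶠ n : ℕ in atTop, (n : ℝ) ^ s ≤ K * (n : ℝ) ^ t) : s ≤ t := by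
  by_contra! hts
  have hlarge : ∀ᶠ n : ℕ in atTop, 0 < (n : ℝ) ∧ K < (n : ℝ) ^ (s - t) := by
    have hn := tendsto_natCast_atTop_atTop (R := ℝ)
    filter_upwards [hn.eventually_gt_atTop 0,
      ((tendsto_rpow_atTop (sub_pos.2 hts)).comp hn).eventually_gt_atTop K] with n h0 hK
    exact ⟨h0, hK⟩
  obtain ⟨n, hle, hn, hK⟩ := (h.and_eventually hlarge).exists
  have hsplit : (n : ℝ) ^ s = (n : ℝ) ^ (s - t) * (n : ℝ) ^ t := by
    rw [← Real.rpow_add hn, sub_add_cancel]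
  rw [hsplit] at hle
  exact (mul_lt_mul_of_pos_right hK (Real.rpow_pos_of_pos hn t)).not_ge hle

theorem mem_convexHull_quadrilateral {D x y : ℝ} (hD : 1 < D) (hx : 0 ≤ x) (hy : y ≤ 1)
    (hxD : D * x ≤ D - 1) (hxy : x ≤ (D - 1) * y) :
    (x, y) ∈ convexHull ℝ
      ({((0 : ℝ), (0 : ℝ)), ((0 : ℝ), (1 : ℝ)), ((D - 1) / D, (1 : ℝ)),
        ((D - 1) / D, 1 / D)} : Set (ℝ × ℝ)) := by
  have hD0 : 0 < D := by linarith
  have hxe : x < D - 1 := by nlinarith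
  have hD1 : D - 1 ≠ 0 := by linarith
  have hDx : D - 1 - x ≠ 0 := by linarith
  set t := D * x / (D - 1)
  set l := ((D - 1) * y - x) / (D - 1 - x)
  have ht0 : 0 ≤ t := by positivity
  have ht1 : t ≤ 1 := by rw [div_le_one (by linarith)]; linarith
  have hl0 : 0 ≤ l := div_nonneg (by linarith) (by linarith)
  have hl1 : l ≤ 1 := by rw [div_le_one (by linarith)]; nlinarith
  set w : Fin 4 → ℝ := ![(1 - l) * (1 - t), l * (1 - t), l * t, (1 - l) * t]
  set z : Fin 4 → ℝ × ℝ := ![(0, 0), (0, 1), ((D - 1) / D, 1), ((D - 1) / D, 1 / D)]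
  have hw : ∑ i, w i = 1 := by simp [w, Fin.sum_univ_four]; ring
  have hxy : (x, y) = univ.centerMass w z := by
    rw [Finset.centerMass_eq_of_sum_1 _ z hw]
    simp only [w, z, Fin.sum_univ_four, Matrix.cons_val, Prod.smul_mk, smul_eq_mul,
      Prod.mk_add_mk, Prod.mk.injEq]
    constructor <;> simp only [t, l] <;> field_simp <;> ring
  rw [hxy]
  refine Finset.centerMass_mem_convexHull _ (fun i _ ↦ ?_) (by rw [hw]; norm_num)
    (fun i _ ↦ ?_)
  · fin_cases i <;> simp [w] <;> nlinarith
  · fin_cases i <;> simp [z]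

namespace ConeFF

variable (F : Type) [Field F] [Fintype F] [DecidableEq F] {d : ℕ} (hd : 3 ≤ d)
  {p r : ℝ≥0∞} {C₀ : ℝ}

theorem zero_mem_cone : 0 ∈ cone F d hd := by
  simp [cone]

theorem neg_mem_cone {x : Fin d → F} (hx : x ∈ cone F d hd) : -x ∈ cone F d hd := by
  simpa [cone] using hx

theorem card_cone_pos : 0 < #(cone F d hd) :=
  Finset.card_pos.2 ⟨0, zero_mem_cone F hd⟩

theorem avg_ind_zero {y : Fin d → F} (hy : y ∈ cone F d hd) :
    avg F d hd (ind {0}) y = (#(cone F d hd) : ℂ)⁻¹ := by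
  simp [avg, ind, sub_eq_zero, hy]

theorem avg_ind_cone_zero : avg F d hd (ind (cone F d hd)) 0 = 1 := by
  have hC : (#(cone F d hd) : ℂ) ≠ 0 := by exact_mod_cast (card_cone_pos F hd).ne'
  have hneg : ∀ x ∈ cone F d hd, ind (cone F d hd) (0 - x) = 1 := fun x hx ↦ by
    simp [ind, neg_mem_cone F hd hx]
  rw [avg, Finset.sum_congr rfl hneg, sum_const, nsmul_eq_mul, mul_one, inv_mul_cancel₀ hC]

theorem coneMeasure_cone : coneMeasure F d hd (cone F d hd) = 1 := by
  rw [coneMeasure, Measure.smul_apply, Measure.restrict_apply MeasurableSpace.measurableSet_top,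
    Set.inter_self, Measure.count_apply_finset' MeasurableSpace.measurableSet_top, smul_eq_mul,
    ENNReal.inv_mul_cancel (by exact_mod_cast (card_cone_pos F hd).ne') (by simp)]

theorem coneMeasure_zero : coneMeasure F d hd {0} = (#(cone F d hd) : ℝ≥0∞)⁻¹ := by
  rw [coneMeasure, Measure.smul_apply, Measure.restrict_apply MeasurableSpace.measurableSet_top,
    Set.singleton_inter_of_mem (zero_mem_cone F hd)]
  simp

theorem eLpNorm_ind_dxMeasure (E : Finset (Fin d → F)) (hp : p ≠ 0) (hp' : p ≠ ∞) :
    eLpNorm (ind E) p (dxMeasure F d) =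
      ENNReal.ofReal ((#E / (Fintype.card F : ℝ) ^ d) ^ p⁻¹.toReal) := by
  have hind : ind E = (E : Set (Fin d → F)).indicator fun _ ↦ 1 := by
    ext x; simp [ind, Set.indicator]
  rw [hind, eLpNorm_indicator_const MeasurableSpace.measurableSet_top hp hp', dxMeasure,
    Measure.smul_apply, Measure.count_apply_finset' MeasurableSpace.measurableSet_top]
  have hq : (0 : ℝ) < (Fintype.card F : ℝ) ^ d := pow_pos (by exact_mod_cast Fintype.card_pos) d
  rw [enorm_one, one_mul, smul_eq_mul, ENNReal.toReal_inv, one_div,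
    ← ENNReal.ofReal_rpow_of_nonneg (by positivity) (by positivity),
    ENNReal.ofReal_div_of_pos hq, ENNReal.ofReal_pow (Nat.cast_nonneg _), ENNReal.ofReal_natCast,
    ENNReal.ofReal_natCast, ENNReal.div_eq_inv_mul]

open MvPolynomial in
theorem card_cone_mul_card_le :
    #(cone F d hd) * Fintype.card F ≤ 2 * Fintype.card F ^ d := by
  set S := Finset.univ.filter (fun i : Fin d => (i : ℕ) < d - 2)
  set a : Fin d := ⟨d - 2, by omega⟩
  set b : Fin d := ⟨d - 1, by omega⟩
  let P : MvPolynomial (Fin d) F := ∑ i ∈ S, X i ^ 2 - X a * X b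
  have hcone : cone F d hd =
      {x ∈ Fintype.piFinset fun _ : Fin d ↦ (univ : Finset F) | eval x P = 0} := by
    ext x; simp [cone, P, sub_eq_zero, S, a, b]
  have hP : P ≠ 0 := by
    set v : Fin d → F := fun i ↦ if (i : ℕ) < d - 2 then 0 else 1
    have hv : eval v P = -1 := by
      simp only [P, map_sub, map_sum, map_pow, map_mul, eval_X]
      rw [Finset.sum_eq_zero fun i hi ↦ by simp [v, (Finset.mem_filter.1 hi).2]]
      simp [v, a, b]
      omega
    intro h
    simp [h] at hv
  have hdeg : P.totalDegree ≤ 2 := by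
    refine (totalDegree_sub _ _).trans (max_le ?_ ?_)
    · exact totalDegree_finsetSum_le fun i _ ↦ (totalDegree_pow _ _).trans (by simp)
    · exact (totalDegree_mul _ _).trans (by simp)
  have hq : (0 : ℚ≥0) < Fintype.card F := by exact_mod_cast Fintype.card_pos
  have key := schwartz_zippel_totalDegree hP (univ : Finset F)
  rw [← hcone, card_univ, div_le_div_iff₀ (by positivity) hq] at key
  have h2 : (P.totalDegree : ℚ≥0) ≤ 2 := by exact_mod_cast hdeg
  have : (#(cone F d hd) * Fintype.card F : ℚ≥0) ≤ 2 * Fintype.card F ^ d :=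
    key.trans (by gcongr)
  exact_mod_cast this

theorem card_cone_le_rpow :
    (#(cone F d hd) : ℝ) ≤ 2 * (Fintype.card F : ℝ) ^ ((d : ℝ) - 1) := by
  have hq : (0 : ℝ) < Fintype.card F := by exact_mod_cast Fintype.card_pos
  have h : (#(cone F d hd) * Fintype.card F : ℝ) ≤ 2 * Fintype.card F ^ d := by
    exact_mod_cast card_cone_mul_card_le F hd
  rw [Real.rpow_sub_one hq.ne', Real.rpow_natCast, ← mul_div_assoc, le_div_iff₀ hq]
  exact h

-- Test on the Dirac mass at the origin: `A_C δ₀ = |C|⁻¹` on all of `C`.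
theorem rpow_le_mul_card_cone (hp : p ≠ 0) (hp' : p ≠ ∞) (hr : r ≠ 0)
    (hop : ∀ f, eLpNorm (avg F d hd f) r (coneMeasure F d hd) ≤
      ENNReal.ofReal C₀ * eLpNorm f p (dxMeasure F d)) :
    (Fintype.card F : ℝ) ^ (d * p⁻¹.toReal) ≤ C₀ * #(cone F d hd) := by
  have hn : (0 : ℝ) < #(cone F d hd) := by exact_mod_cast card_cone_pos F hd
  have hq : (0 : ℝ) < Fintype.card F := by exact_mod_cast Fintype.card_pos
  have hlow : ENNReal.ofReal (#(cone F d hd) : ℝ)⁻¹ ≤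
      eLpNorm (avg F d hd (ind {0})) r (coneMeasure F d hd) := by
    have := mul_measure_rpow_le_eLpNorm MeasurableSpace.measurableSet_top
      (by rw [coneMeasure_cone F hd]; exact one_ne_zero) hr
      (f := avg F d hd (ind {0})) (c := ‖(#(cone F d hd) : ℂ)⁻¹‖ₑ)
      fun y hy ↦ by rw [avg_ind_zero F hd hy]
    rwa [coneMeasure_cone F hd, ENNReal.one_rpow, mul_one, ← ofReal_norm, norm_inv,
      Complex.norm_natCast] at this
  have hbound := hlow.trans (hop _)
  rw [eLpNorm_ind_dxMeasure F _ hp hp', card_singleton, Nat.cast_one] at hbound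
  have h := le_mul_of_ofReal_le_ofReal_mul (inv_pos.2 hn) (by positivity) hbound
  rw [one_div, Real.inv_rpow (by positivity), ← Real.rpow_natCast, ← Real.rpow_mul hq.le,
    ← div_eq_mul_inv, le_div_iff₀ (by positivity), inv_mul_le_iff₀ hn] at h
  linarith

-- Test on the indicator of the cone: `A_C 1_C (0) = 1` because `C = -C`.
theorem rpow_le_mul_card_cone_rpow (hp : p ≠ 0) (hp' : p ≠ ∞) (hr : r ≠ 0)
    (hop : ∀ f, eLpNorm (avg F d hd f) r (coneMeasure F d hd) ≤
      ENNReal.ofReal C₀ * eLpNorm f p (dxMeasure F d)) :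
    (Fintype.card F : ℝ) ^ (d * p⁻¹.toReal) ≤
      C₀ * (#(cone F d hd) : ℝ) ^ (p⁻¹.toReal + r⁻¹.toReal) := by
  have hn : (0 : ℝ) < #(cone F d hd) := by exact_mod_cast card_cone_pos F hd
  have hq : (0 : ℝ) < Fintype.card F := by exact_mod_cast Fintype.card_pos
  have hlow : ENNReal.ofReal ((#(cone F d hd) : ℝ)⁻¹ ^ r⁻¹.toReal) ≤
      eLpNorm (avg F d hd (ind (cone F d hd))) r (coneMeasure F d hd) := by
    have := mul_measure_rpow_le_eLpNorm MeasurableSpace.measurableSet_top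
      (by rw [coneMeasure_zero F hd]; simp) hr
      (f := avg F d hd (ind (cone F d hd))) (s := {0}) (c := 1) fun y hy ↦ by
        rw [Set.mem_singleton_iff.1 hy, avg_ind_cone_zero, enorm_one]
    rwa [coneMeasure_zero F hd, one_mul, ← ENNReal.ofReal_natCast, ← ENNReal.ofReal_inv_of_pos hn,
      ENNReal.ofReal_rpow_of_nonneg (by positivity) ENNReal.toReal_nonneg] at this
  have hbound := hlow.trans (hop _)
  rw [eLpNorm_ind_dxMeasure F _ hp hp'] at hbound
  have h := le_mul_of_ofReal_le_ofReal_mul (by positivity) (by positivity) hbound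
  rw [Real.inv_rpow hn.le, Real.div_rpow hn.le (by positivity), ← Real.rpow_natCast,
    ← Real.rpow_mul hq.le, mul_div_assoc', le_div_iff₀ (by positivity),
    inv_mul_le_iff₀ (by positivity)] at h
  rw [Real.rpow_add hn]
  linarith

theorem rpow_le_of_avg_bound (hp : p ≠ 0) (hp' : p ≠ ∞) (hr : r ≠ 0)
    (hop : ∀ f, eLpNorm (avg F d hd f) r (coneMeasure F d hd) ≤
      ENNReal.ofReal C₀ * eLpNorm f p (dxMeasure F d)) :
    (Fintype.card F : ℝ) ^ (d * p⁻¹.toReal) ≤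
        2 * C₀ * (Fintype.card F : ℝ) ^ ((d : ℝ) - 1) ∧
      (Fintype.card F : ℝ) ^ (d * p⁻¹.toReal) ≤ C₀ * 2 ^ (p⁻¹.toReal + r⁻¹.toReal) *
        (Fintype.card F : ℝ) ^ (((d : ℝ) - 1) * (p⁻¹.toReal + r⁻¹.toReal)) := by
  have hq : (0 : ℝ) < Fintype.card F := by exact_mod_cast Fintype.card_pos
  have hn : (0 : ℝ) < #(cone F d hd) := by exact_mod_cast card_cone_pos F hd
  have hA := rpow_le_mul_card_cone F hd hp hp' hr hop
  have hC₀ : 0 ≤ C₀ :=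
    (mul_nonneg_iff_of_pos_right hn).1 ((Real.rpow_pos_of_pos hq _).le.trans hA)
  have hcard := card_cone_le_rpow F hd
  refine ⟨hA.trans ?_, (rpow_le_mul_card_cone_rpow F hd hp hp' hr hop).trans ?_⟩
  · linarith [mul_le_mul_of_nonneg_left hcard hC₀]
  · rw [mul_assoc, Real.rpow_mul hq.le, ← Real.mul_rpow (by norm_num) (by positivity)]
    gcongr

theorem statement2_general (d : ℕ) (hd : 3 ≤ d) (p r : ℝ≥0∞) (hr : 1 ≤ r)
    (C₀ : ℝ)
    (h : ∃ N : ℕ, ∀ (F : Type) [Field F] [Fintype F] [DecidableEq F],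
      ringChar F ≠ 2 → N ≤ Fintype.card F →
        (∀ H : Submodule F (Fin d → F), (H : Set (Fin d → F)) ⊆ ↑(cone F d hd) →
          (Nat.card H : ℝ) ≤ (Fintype.card F : ℝ) ^ (((d : ℝ) - 1) / 2)) ∧
        (∀ f : (Fin d → F) → ℂ,
          eLpNorm (avg F d hd f) r (coneMeasure F d hd) ≤
            ENNReal.ofReal C₀ * eLpNorm f p (dxMeasure F d))) :
    (p⁻¹.toReal, r⁻¹.toReal) ∈ convexHull ℝ
      ({((0 : ℝ), (0 : ℝ)), ((0 : ℝ), (1 : ℝ)), (((d : ℝ) - 1) / d, (1 : ℝ)),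
        (((d : ℝ) - 1) / d, 1 / (d : ℝ))} : Set (ℝ × ℝ)) := by
  obtain ⟨N, hN⟩ := h
  have hd1 : (1 : ℝ) < d := by exact_mod_cast (by omega : 1 < d)
  have hy1 : r⁻¹.toReal ≤ 1 := by
    simpa using ENNReal.toReal_mono ENNReal.one_ne_top (ENNReal.inv_le_one.2 hr)
  have hy0 : 0 ≤ r⁻¹.toReal := ENNReal.toReal_nonneg
  rcases eq_or_ne p⁻¹.toReal 0 with hx | hx
  · rw [hx]
    exact mem_convexHull_quadrilateral hd1 le_rfl hy1 (by linarith) (mul_nonneg (by linarith) hy0)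
  obtain ⟨hp, hp'⟩ : p ≠ 0 ∧ p ≠ ∞ := by simpa [ENNReal.toReal_eq_zero_iff, not_or] using hx
  have hbounds : ∃ᶠ q : ℕ in Filter.atTop,
      (q : ℝ) ^ (d * p⁻¹.toReal) ≤ 2 * C₀ * (q : ℝ) ^ ((d : ℝ) - 1) ∧
      (q : ℝ) ^ (d * p⁻¹.toReal) ≤ C₀ * 2 ^ (p⁻¹.toReal + r⁻¹.toReal) *
        (q : ℝ) ^ (((d : ℝ) - 1) * (p⁻¹.toReal + r⁻¹.toReal)) := by
    refine ((Nat.frequently_atTop_iff_infinite.2 Nat.infinite_setOfPred_prime).and_eventually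
      (Filter.eventually_ge_atTop (max N 3))).mono ?_
    rintro q ⟨hq, hqN⟩
    have : Fact q.Prime := ⟨hq⟩
    have hchar : ringChar (ZMod q) ≠ 2 := by rw [ZMod.ringChar_zmod_n]; omega
    have hcard : N ≤ Fintype.card (ZMod q) := by rw [ZMod.card]; omega
    simpa [ZMod.card] using rpow_le_of_avg_bound (ZMod q) hd hp hp' (zero_lt_one.trans_le hr).ne'
      (hN (ZMod q) hchar hcard).2
  have hxd := le_of_frequently_rpow_le_mul_rpow (hbounds.mono fun _ h ↦ h.1)
  have hxy := le_of_frequently_rpow_le_mul_rpow (hbounds.mono fun _ h ↦ h.2)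
  exact mem_convexHull_quadrilateral hd1 ENNReal.toReal_nonneg hy1 hxd (by linarith)

/-- necessary conditions for the boundedness of the restricted averaging
operator when the cone contains no subspace of cardinality `> q^{(d-1)/2}`. -/
theorem statement2 (d : ℕ) (hd : 3 ≤ d) (p r : ℝ≥0∞) (hp : 1 ≤ p) (hr : 1 ≤ r)
    (C₀ : ℝ) (hC₀ : 0 < C₀)
    (h : ∃ N : ℕ, ∀ (F : Type) [Field F] [Fintype F] [DecidableEq F],
      ringChar F ≠ 2 → N ≤ Fintype.card F →
        (∀ H : Submodule F (Fin d → F), (H : Set (Fin d → F)) ⊆ ↑(cone F d hd) →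
          (Nat.card H : ℝ) ≤ (Fintype.card F : ℝ) ^ (((d : ℝ) - 1) / 2)) ∧
        (∀ f : (Fin d → F) → ℂ,
          eLpNorm (avg F d hd f) r (coneMeasure F d hd) ≤
            ENNReal.ofReal C₀ * eLpNorm f p (dxMeasure F d))) :
    (p⁻¹.toReal, r⁻¹.toReal) ∈ convexHull ℝ
      ({((0 : ℝ), (0 : ℝ)), ((0 : ℝ), (1 : ℝ)), (((d : ℝ) - 1) / d, (1 : ℝ)),
        (((d : ℝ) - 1) / d, 1 / (d : ℝ))} : Set (ℝ × ℝ)) :=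
  statement2_general d hd p r hr C₀ h

end ConeFF
end

section
/- Let d ≥ 4 be even and let C* = {m ∈ F_q^d : Γ(m) = 0}. There is a constant C₀ > 0 independent of q such that for every power q of an odd prime and every subset E ⊂ F_q^d, ∑_{m∈C*} |E^∨(m)|² ≤ C₀ (q^{−d−1}|E| + q^{−3d/2}|E|²). -/
open Finset MeasureTheory
open scoped ENNReal

/-!
Detect the cone by orthogonality, `q · 1[Γ(m) = 0] = ∑_t χ(t Γ(m))`, and expand `|E^∨(m)|²` as a
double sum over `E`. This gives `q ∑_{Γ(m)=0} |E^∨(m)|² = q^{-2d} ∑_t ∑_{x,y ∈ E} S(t, x - y)` with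
`S(t, u) = ∑_m χ(t Γ(m) + m · u)`. For `t = 0`, `S(0, u) = q^d 1[u = 0]`, which contributes
`q^{-d} |E|`. For `t ≠ 0` the phase is a quadratic polynomial whose polar map is injective,
since `Γ` is nondegenerate in odd characteristic, so `|S(t, u)| = q^{d/2}`; the `q - 1` such `t`
contribute at most `q^{1 - 3d/2} |E|²`. Hence the bound holds with `C₀ = 1`.
-/

namespace ConeFF

open scoped ComplexConjugate

section Characters

variable {F : Type*} [Field F] [Fintype F] [DecidableEq F] (χ : AddChar F ℂ)

lemma sum_addChar_dotProduct {ι : Type*} [Fintype ι] [DecidableEq ι] (hχ : χ ≠ 1)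
    (v : ι → F) :
    ∑ m : ι → F, χ (m ⬝ᵥ v) = if v = 0 then (Fintype.card F : ℂ) ^ Fintype.card ι else 0 := by
  classical
  let ψ : AddChar (ι → F) ℂ :=
    χ.compAddMonoidHom (AddMonoidHom.mk' (· ⬝ᵥ v) fun a b => add_dotProduct a b v)
  have hψ : ∀ m, ψ m = χ (m ⬝ᵥ v) := fun _ => rfl
  simp_rw [← hψ, AddChar.sum_eq_ite ψ, Fintype.card_fun, Nat.cast_pow]
  congr 1
  refine propext ⟨fun h => ?_, fun h => ?_⟩
  · by_contra hv
    obtain ⟨i, hi⟩ := Function.ne_iff.mp hv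
    obtain ⟨a, ha⟩ := AddChar.ne_one_iff.mp hχ
    refine ha ?_
    have := DFunLike.congr_fun h (Pi.single i (a / v i))
    rwa [hψ, single_dotProduct, div_mul_cancel₀ a hi] at this
  · ext m
    simp [hψ, h]

theorem norm_sum_addChar_sq_of_add_eq {ι : Type*} [Fintype ι] [DecidableEq ι] (hχ : χ ≠ 1)
    (f : (ι → F) → F) (w : (ι → F) → ι → F)
    (hf : ∀ m h, f (m + h) = f m + f h + m ⬝ᵥ w h) (hw : ∀ h, w h = 0 → h = 0) :
    ‖∑ m, χ (f m)‖ ^ 2 = (Fintype.card F : ℝ) ^ Fintype.card ι := by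
  have hf0 : f 0 = 0 := by simpa using hf 0 0
  have hw0 : w 0 = 0 := funext fun i => by simpa [hf0] using hf (Pi.single i 1) 0
  have hdiff : ∀ m h, χ (f (m + h)) * conj (χ (f m)) = χ (f h) * χ (m ⬝ᵥ w h) := by
    intro m h
    rw [← AddChar.map_neg_eq_conj, ← AddChar.map_add_eq_mul, ← AddChar.map_add_eq_mul, hf]
    congr 1
    ring
  -- Substituting `m ↦ m + h` leaves a linear phase in `m`, whose sum vanishes unless `h = 0`.
  have key : (∑ m, χ (f m)) * conj (∑ m, χ (f m)) =
      (Fintype.card F : ℂ) ^ Fintype.card ι := by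
    calc (∑ m, χ (f m)) * conj (∑ m, χ (f m))
        = ∑ m, ∑ h, χ (f (m + h)) * conj (χ (f m)) := by
          rw [map_sum, Finset.sum_mul_sum, Finset.sum_comm]
          exact Finset.sum_congr rfl fun m _ =>
            (Fintype.sum_equiv (Equiv.addLeft m) _ _ fun h => rfl).symm
      _ = ∑ h, χ (f h) * ∑ m, χ (m ⬝ᵥ w h) := by
          simp_rw [hdiff, Finset.mul_sum]
          exact Finset.sum_comm
      _ = (Fintype.card F : ℂ) ^ Fintype.card ι := by
          simp_rw [sum_addChar_dotProduct χ hχ, mul_ite, mul_zero]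
          rw [Fintype.sum_eq_single 0 fun h hh => if_neg (mt (hw h) hh)]
          simp [hf0, hw0]
  rw [RCLike.mul_conj] at key
  exact Complex.ofReal_injective (by push_cast; exact key)

theorem sum_filter_eq_zero_eq_sum_addChar (hχ : χ ≠ 1) {α : Type*} [Fintype α] (Q : α → F)
    (g : α → ℂ) :
    ∑ m ∈ univ.filter (fun m => Q m = 0), g m =
      (Fintype.card F : ℂ)⁻¹ * ∑ t, ∑ m, χ (t * Q m) * g m := by
  have hq : (Fintype.card F : ℂ) ≠ 0 := by simp
  rw [eq_inv_mul_iff_mul_eq₀ hq, Finset.sum_comm, Finset.sum_filter, Finset.mul_sum]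
  refine Finset.sum_congr rfl fun m _ => ?_
  rw [← Finset.sum_mul, AddChar.sum_mulShift _ (AddChar.IsPrimitive.of_ne_one hχ)]
  split_ifs <;> simp

end Characters

section Gamma

variable {F : Type} [Field F] {d : ℕ} (hd : 3 ≤ d)

lemma sum_univ_fin_eq_sum_filter_add_last_two {M : Type*} [AddCommMonoid M] (f : Fin d → M) :
    ∑ i, f i = ∑ i ∈ univ.filter (fun i : Fin d => (i : ℕ) < d - 2), f i
      + f ⟨d - 2, by omega⟩ + f ⟨d - 1, by omega⟩ := by
  have hcompl : univ.filter (fun i : Fin d => ¬ (i : ℕ) < d - 2) =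
      {⟨d - 2, by omega⟩, ⟨d - 1, by omega⟩} := by
    ext i
    simp only [mem_filter, mem_univ, true_and, mem_insert, mem_singleton, Fin.ext_iff]
    omega
  rw [← Finset.sum_filter_add_sum_filter_not univ (fun i : Fin d => (i : ℕ) < d - 2), hcompl,
    Finset.sum_pair (by simp only [ne_eq, Fin.ext_iff]; omega), add_assoc]

def gammaPolar (h : Fin d → F) : Fin d → F := fun i =>
  if (i : ℕ) < d - 2 then 2 * h i
  else if (i : ℕ) = d - 2 then -4 * h ⟨d - 1, by omega⟩ else -4 * h ⟨d - 2, by omega⟩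

variable {hd}

lemma gammaPolar_of_lt (h : Fin d → F) {i : Fin d} (hi : (i : ℕ) < d - 2) :
    gammaPolar hd h i = 2 * h i := if_pos hi

lemma gammaPolar_penultimate (h : Fin d → F) :
    gammaPolar hd h ⟨d - 2, by omega⟩ = -4 * h ⟨d - 1, by omega⟩ := by
  simp [gammaPolar]

lemma gammaPolar_last (h : Fin d → F) :
    gammaPolar hd h ⟨d - 1, by omega⟩ = -4 * h ⟨d - 2, by omega⟩ := by
  simp only [gammaPolar]
  rw [if_neg (by omega), if_neg (by omega)]

lemma eq_zero_of_gammaPolar_eq_zero (h2 : (2 : F) ≠ 0) {h : Fin d → F}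
    (H : gammaPolar hd h = 0) : h = 0 := by
  have h4 : (4 : F) ≠ 0 := by
    rw [show (4 : F) = 2 * 2 by norm_num]
    exact mul_ne_zero h2 h2
  funext i
  by_cases hi : (i : ℕ) < d - 2
  · simpa [gammaPolar_of_lt h hi, h2] using congrFun H i
  · obtain hi | hi : i = ⟨d - 2, by omega⟩ ∨ i = ⟨d - 1, by omega⟩ := by
      simp only [Fin.ext_iff]; omega
    all_goals rw [hi]
    · simpa [gammaPolar_last, h4] using congrFun H ⟨d - 1, by omega⟩
    · simpa [gammaPolar_penultimate, h4] using congrFun H ⟨d - 2, by omega⟩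

theorem gammaForm_add (m h : Fin d → F) :
    gammaForm F d hd (m + h) = gammaForm F d hd m + gammaForm F d hd h + m ⬝ᵥ gammaPolar hd h := by
  set A := univ.filter (fun i : Fin d => (i : ℕ) < d - 2)
  have hsq : ∑ i ∈ A, (m i + h i) ^ 2 =
      ∑ i ∈ A, m i ^ 2 + ∑ i ∈ A, h i ^ 2 + 2 * ∑ i ∈ A, m i * h i := by
    rw [Finset.mul_sum, ← Finset.sum_add_distrib, ← Finset.sum_add_distrib]
    exact Finset.sum_congr rfl fun i _ => by ring
  have hpolar : ∑ i ∈ A, m i * gammaPolar hd h i = 2 * ∑ i ∈ A, m i * h i := by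
    rw [Finset.mul_sum]
    refine Finset.sum_congr rfl fun i hi => ?_
    rw [gammaPolar_of_lt h (Finset.mem_filter.mp hi).2]
    ring
  simp only [gammaForm, dotProduct, Pi.add_apply]
  rw [sum_univ_fin_eq_sum_filter_add_last_two hd, hsq, hpolar, gammaPolar_penultimate, gammaPolar_last]
  ring

end Gamma

section Fourier

variable {F : Type} [Field F] [Fintype F] [DecidableEq F] (χ : AddChar F ℂ) {d : ℕ} (hd : 3 ≤ d)

def gammaGaussSum (t : F) (u : Fin d → F) : ℂ :=
  ∑ m, χ (t * gammaForm F d hd m + m ⬝ᵥ u)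

variable {χ}

lemma gammaGaussSum_zero (hχ : χ ≠ 1) (u : Fin d → F) :
    gammaGaussSum χ hd 0 u = if u = 0 then (Fintype.card F : ℂ) ^ d else 0 := by
  simp only [gammaGaussSum, zero_mul, zero_add, sum_addChar_dotProduct χ hχ, Fintype.card_fin]

theorem norm_gammaGaussSum (hχ : χ ≠ 1) (h2 : (2 : F) ≠ 0) {t : F} (ht : t ≠ 0)
    (u : Fin d → F) :
    ‖gammaGaussSum χ hd t u‖ = (Fintype.card F : ℝ) ^ ((d : ℝ) / 2) := by
  have hsq := norm_sum_addChar_sq_of_add_eq χ hχ (fun m => t * gammaForm F d hd m + m ⬝ᵥ u)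
    (fun h => t • gammaPolar hd h)
    (fun m h => by
      rw [gammaForm_add, add_dotProduct, dotProduct_smul, smul_eq_mul]
      ring)
    (fun h H => eq_zero_of_gammaPolar_eq_zero h2 ((smul_eq_zero.mp H).resolve_left ht))
  rw [gammaGaussSum, ← Real.sqrt_sq (norm_nonneg _), hsq, Fintype.card_fin, Real.sqrt_eq_rpow,
    ← Real.rpow_natCast, ← Real.rpow_mul (by positivity)]
  ring_nf

variable (χ)

lemma invFT_ind_mul_conj (E : Finset (Fin d → F)) (m : Fin d → F) :
    invFT F d χ (ind E) m * conj (invFT F d χ (ind E) m) =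
      (((Fintype.card F : ℂ) ^ d)⁻¹) ^ 2 * ∑ x ∈ E, ∑ y ∈ E, χ (m ⬝ᵥ (x - y)) := by
  have hinvFT : invFT F d χ (ind E) m = ((Fintype.card F : ℂ) ^ d)⁻¹ * ∑ x ∈ E, χ (m ⬝ᵥ x) := by
    simp [invFT, ind, Finset.sum_ite_mem]
  have hchar : ∀ x y : Fin d → F, χ (m ⬝ᵥ (x - y)) = χ (m ⬝ᵥ x) * conj (χ (m ⬝ᵥ y)) := by
    intro x y
    rw [dotProduct_sub, sub_eq_add_neg, AddChar.map_add_eq_mul, AddChar.map_neg_eq_conj]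
  simp_rw [hinvFT, hchar, map_mul, map_sum, ← Finset.sum_mul_sum]
  simp only [map_inv₀, map_pow, map_natCast]
  ring

variable {χ}

theorem sum_norm_invFT_sq_gammaForm_eq (hχ : χ ≠ 1) (E : Finset (Fin d → F)) :
    ((∑ m ∈ univ.filter (fun m => gammaForm F d hd m = 0), ‖invFT F d χ (ind E) m‖ ^ 2 : ℝ) : ℂ) =
      ((Fintype.card F : ℂ) * ((Fintype.card F : ℂ) ^ d) ^ 2)⁻¹ *
        ∑ t, ∑ x ∈ E, ∑ y ∈ E, gammaGaussSum χ hd t (x - y) := by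
  have hphase : ∀ t m x y, χ (t * gammaForm F d hd m + m ⬝ᵥ (x - y)) =
      χ (t * gammaForm F d hd m) * χ (m ⬝ᵥ (x - y)) := fun _ _ _ _ => AddChar.map_add_eq_mul ..
  push_cast
  simp_rw [← Complex.mul_conj', invFT_ind_mul_conj, sum_filter_eq_zero_eq_sum_addChar χ hχ,
    gammaGaussSum, hphase, Finset.mul_sum]
  refine Finset.sum_congr rfl fun t _ => ?_
  rw [Finset.sum_comm]
  refine Finset.sum_congr rfl fun x _ => ?_
  rw [Finset.sum_comm]
  exact Finset.sum_congr rfl fun y _ => Finset.sum_congr rfl fun m _ => by ring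

theorem norm_sum_gammaGaussSum_le (hχ : χ ≠ 1) (h2 : (2 : F) ≠ 0) (E : Finset (Fin d → F)) :
    ‖∑ t, ∑ x ∈ E, ∑ y ∈ E, gammaGaussSum χ hd t (x - y)‖ ≤
      (Fintype.card F : ℝ) ^ d * E.card +
        (Fintype.card F - 1) * ((Fintype.card F : ℝ) ^ ((d : ℝ) / 2) * (E.card : ℝ) ^ 2) := by
  have hzero : ∑ x ∈ E, ∑ y ∈ E, gammaGaussSum χ hd 0 (x - y) =
      (Fintype.card F : ℂ) ^ d * E.card := by
    simp [gammaGaussSum_zero hd hχ, sub_eq_zero, mul_comm]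
  have hne : ∀ t ≠ 0, ‖∑ x ∈ E, ∑ y ∈ E, gammaGaussSum χ hd t (x - y)‖ ≤
      (Fintype.card F : ℝ) ^ ((d : ℝ) / 2) * (E.card : ℝ) ^ 2 := by
    intro t ht
    calc ‖∑ x ∈ E, ∑ y ∈ E, gammaGaussSum χ hd t (x - y)‖
        ≤ ∑ x ∈ E, ∑ y ∈ E, (Fintype.card F : ℝ) ^ ((d : ℝ) / 2) :=
          norm_sum_le_of_le _ fun x _ => norm_sum_le_of_le _ fun y _ =>
            (norm_gammaGaussSum hd hχ h2 ht _).le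
      _ = _ := by simp [sq, mul_comm, mul_left_comm]
  rw [← Finset.add_sum_erase _ _ (mem_univ 0)]
  refine (norm_add_le _ _).trans (add_le_add (by rw [hzero]; simp) ?_)
  refine (norm_sum_le_of_le _ fun t ht => hne t (ne_of_mem_erase ht)).trans_eq ?_
  rw [sum_const, card_erase_of_mem (mem_univ 0), card_univ, nsmul_eq_mul,
    Nat.cast_pred Fintype.card_pos]

end Fourier

lemma inv_mul_pow_bound_le_rpow {x : ℝ} (hx : 0 < x) (d : ℕ) {a b : ℝ}
    (hb : 0 ≤ b) :
    (x * (x ^ d) ^ 2)⁻¹ * (x ^ d * a + (x - 1) * (x ^ ((d : ℝ) / 2) * b)) ≤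
      x ^ (-((d : ℝ) + 1)) * a + x ^ (-(3 * (d : ℝ) / 2)) * b := by
  set y := x ^ ((d : ℝ) / 2)
  have hy : 0 < y := by positivity
  have hxd : x ^ d = y ^ 2 := by
    rw [← Real.rpow_natCast, ← Real.rpow_natCast y, ← Real.rpow_mul hx.le]
    norm_num
  have hxd1 : x ^ (-((d : ℝ) + 1)) = (x * y ^ 2)⁻¹ := by
    rw [Real.rpow_neg hx.le, Real.rpow_add hx, Real.rpow_one, Real.rpow_natCast, hxd, mul_comm]
  have hxd3 : x ^ (-(3 * (d : ℝ) / 2)) = (y ^ 3)⁻¹ := by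
    rw [Real.rpow_neg hx.le, ← Real.rpow_natCast y, ← Real.rpow_mul hx.le]
    ring_nf
  rw [hxd, hxd1, hxd3]
  field_simp
  nlinarith [mul_nonneg hb hy.le]

/-- `∑_{m : Γ(m)=0} |E^∨(m)|² ≲ q^{-d-1}|E| + q^{-3d/2}|E|²` for even `d ≥ 4`. -/
theorem statement7 (d : ℕ) (hd : 4 ≤ d) :
    ∃ C₀ : ℝ, 0 < C₀ ∧
      ∀ (F : Type) [Field F] [Fintype F] [DecidableEq F], ringChar F ≠ 2 →
        ∀ χ : AddChar F ℂ, (∃ a, χ a ≠ 1) →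
          ∀ E : Finset (Fin d → F),
            ∑ m ∈ Finset.univ.filter (fun m : Fin d → F => gammaForm F d (by omega) m = 0),
                ‖invFT F d χ (ind E) m‖ ^ 2 ≤
              C₀ * ((Fintype.card F : ℝ) ^ (-((d : ℝ) + 1)) * E.card +
                (Fintype.card F : ℝ) ^ (-(3 * (d : ℝ) / 2)) * (E.card : ℝ) ^ 2) := by
  refine ⟨1, one_pos, fun F _ _ _ hchar χ hχ E => ?_⟩
  have hχ1 : χ ≠ 1 := AddChar.ne_one_iff.mpr hχ
  have hq : (0 : ℝ) < Fintype.card F := by exact_mod_cast Fintype.card_pos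
  rw [one_mul]
  calc _ = ‖((_ : ℝ) : ℂ)‖ := (Complex.norm_of_nonneg (by positivity)).symm
    _ = ((Fintype.card F : ℝ) * ((Fintype.card F : ℝ) ^ d) ^ 2)⁻¹ *
          ‖∑ t, ∑ x ∈ E, ∑ y ∈ E, gammaGaussSum χ (by omega) t (x - y)‖ := by
        rw [sum_norm_invFT_sq_gammaForm_eq _ hχ1, norm_mul, norm_inv]
        norm_cast
    _ ≤ _ := by
        gcongr
        exact norm_sum_gammaGaussSum_le _ hχ1 (Ring.two_ne_zero hchar) E
    _ ≤ _ := inv_mul_pow_bound_le_rpow hq d (by positivity)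

end ConeFF
end
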